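/- Conservation law (2.11) of Theorem 2.2: let p, q : ℝ × ℝ → ℝ be continuously differentiable, let f : ℝ × ℝ² → ℂ, (t,x,y) ↦ f(t,x,y), be smooth, suppose there is a compact set K ⊂ ℝ² such that f(t,·,·) vanishes outside K for all t, and suppose f satisfies the linear evolution equation (2.10): ∂f/∂t = ∂³f/∂x³ + ∂³f/∂y³ + q(x,t)·∂f/∂x + (1/2)·(∂q/∂x)(x,t)·f + p(y,t)·∂f/∂y + (1/2)·(∂p/∂y)(y,t)·f. Then for every t ∈ ℝ, ∬_{ℝ²} |f(t,x,y)|² dx dy = ∬_{ℝ²} |f(0,x,y)|² dx dy. -/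

import Mathlib

open MeasureTheory

/-- `∂_x` : partial derivative in the first variable. -/
noncomputable def dX (g : ℝ × ℝ → ℂ) : ℝ × ℝ → ℂ :=
  fun z => deriv (fun x => g (x, z.2)) z.1

/-- `∂_y` : partial derivative in the second variable. -/
noncomputable def dY (g : ℝ × ℝ → ℂ) : ℝ × ℝ → ℂ :=
  fun z => deriv (fun y => g (z.1, y)) z.2

section Aux

open Set
open scoped ContDiff

/-- Directional x-derivative via `fderiv`. -/
noncomputable def DDx {E : Type*} [NormedAddCommGroup E] [NormedSpace ℝ E]
    (g : ℝ × ℝ → E) : ℝ × ℝ → E :=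
  fun z => fderiv ℝ g z (1, 0)

/-- Directional y-derivative via `fderiv`. -/
noncomputable def DDy {E : Type*} [NormedAddCommGroup E] [NormedSpace ℝ E]
    (g : ℝ × ℝ → E) : ℝ × ℝ → E :=
  fun z => fderiv ℝ g z (0, 1)

lemma hasDerivAt_sliceX {E : Type*} [NormedAddCommGroup E] [NormedSpace ℝ E]
    {g : ℝ × ℝ → E} (hg : Differentiable ℝ g) (z : ℝ × ℝ) :
    HasDerivAt (fun x => g (x, z.2)) (DDx g z) z.1 := by
  have h1 : HasDerivAt (fun x : ℝ => (x, z.2)) ((1:ℝ), (0:ℝ)) z.1 :=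
    HasDerivAt.prodMk (hasDerivAt_id _) (hasDerivAt_const _ _)
  have h2 := (hg (z.1, z.2)).hasFDerivAt.comp_hasDerivAt z.1 h1
  simpa [DDx, Function.comp_def] using h2

lemma hasDerivAt_sliceY {E : Type*} [NormedAddCommGroup E] [NormedSpace ℝ E]
    {g : ℝ × ℝ → E} (hg : Differentiable ℝ g) (z : ℝ × ℝ) :
    HasDerivAt (fun y => g (z.1, y)) (DDy g z) z.2 := by
  have h1 : HasDerivAt (fun y : ℝ => (z.1, y)) ((0:ℝ), (1:ℝ)) z.2 :=
    HasDerivAt.prodMk (hasDerivAt_const _ _) (hasDerivAt_id _)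
  have h2 := (hg (z.1, z.2)).hasFDerivAt.comp_hasDerivAt z.2 h1
  simpa [DDy, Function.comp_def] using h2

lemma contDiff_DDx {E : Type*} [NormedAddCommGroup E] [NormedSpace ℝ E]
    {g : ℝ × ℝ → E} (hg : ContDiff ℝ ∞ g) : ContDiff ℝ ∞ (DDx g) := by
  have h := (contDiff_infty_iff_fderiv.mp hg).2
  exact ((ContinuousLinearMap.apply ℝ E ((1:ℝ), (0:ℝ))).contDiff).comp h

lemma contDiff_DDy {E : Type*} [NormedAddCommGroup E] [NormedSpace ℝ E]
    {g : ℝ × ℝ → E} (hg : ContDiff ℝ ∞ g) : ContDiff ℝ ∞ (DDy g) := by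
  have h := (contDiff_infty_iff_fderiv.mp hg).2
  exact ((ContinuousLinearMap.apply ℝ E ((0:ℝ), (1:ℝ))).contDiff).comp h

lemma DDx_zero_off {E : Type*} [NormedAddCommGroup E] [NormedSpace ℝ E]
    {g : ℝ × ℝ → E} {K : Set (ℝ × ℝ)} (hK : IsClosed K)
    (h0 : ∀ z ∉ K, g z = 0) : ∀ z ∉ K, DDx g z = 0 := by
  intro z hz
  have hmem : Kᶜ ∈ nhds z := hK.isOpen_compl.mem_nhds hz
  have heq : g =ᶠ[nhds z] (fun _ => 0) :=
    Filter.eventually_of_mem hmem (fun w hw => h0 w hw)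
  have : fderiv ℝ g z = fderiv ℝ (fun _ : ℝ × ℝ => (0:E)) z := heq.fderiv_eq
  simp [DDx, this]

lemma DDy_zero_off {E : Type*} [NormedAddCommGroup E] [NormedSpace ℝ E]
    {g : ℝ × ℝ → E} {K : Set (ℝ × ℝ)} (hK : IsClosed K)
    (h0 : ∀ z ∉ K, g z = 0) : ∀ z ∉ K, DDy g z = 0 := by
  intro z hz
  have hmem : Kᶜ ∈ nhds z := hK.isOpen_compl.mem_nhds hz
  have heq : g =ᶠ[nhds z] (fun _ => 0) :=
    Filter.eventually_of_mem hmem (fun w hw => h0 w hw)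
  have : fderiv ℝ g z = fderiv ℝ (fun _ : ℝ × ℝ => (0:E)) z := heq.fderiv_eq
  simp [DDy, this]

lemma dX_eq_DDx {g : ℝ × ℝ → ℂ} (hg : Differentiable ℝ g) : dX g = DDx g :=
  funext fun z => (hasDerivAt_sliceX hg z).deriv

lemma dY_eq_DDy {g : ℝ × ℝ → ℂ} (hg : Differentiable ℝ g) : dY g = DDy g :=
  funext fun z => (hasDerivAt_sliceY hg z).deriv

lemma hasDerivAt_conj' {a : ℝ → ℂ} {a' : ℂ} {x : ℝ} (ha : HasDerivAt a a' x) :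
    HasDerivAt (fun s => (starRingEnd ℂ) (a s)) ((starRingEnd ℂ) a') x := by
  have := Complex.conjCLE.toContinuousLinearMap.hasFDerivAt.comp_hasDerivAt x ha
  simpa [Function.comp_def] using this

lemma hasDerivAt_R {a b : ℝ → ℂ} {a' b' : ℂ} {x : ℝ}
    (ha : HasDerivAt a a' x) (hb : HasDerivAt b b' x) :
    HasDerivAt (fun s => ((starRingEnd ℂ) (a s) * b s).re)
      (((starRingEnd ℂ) a' * b x).re + ((starRingEnd ℂ) (a x) * b').re) x := by
  have h1 := (hasDerivAt_conj' ha).mul hb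
  have h2 := Complex.reCLM.hasFDerivAt.comp_hasDerivAt x h1
  simpa [Function.comp_def, Complex.mul_re] using h2

lemma norm_sq_eq_R (w : ℂ) : ‖w‖ ^ 2 = ((starRingEnd ℂ) w * w).re := by
  rw [← Complex.normSq_eq_conj_mul_self]
  rw [Complex.ofReal_re, ← Complex.sq_norm]

lemma contDiff_R {E : Type*} [NormedAddCommGroup E] [NormedSpace ℝ E]
    {a b : E → ℂ} (ha : ContDiff ℝ ∞ a) (hb : ContDiff ℝ ∞ b) :
    ContDiff ℝ ∞ (fun z => ((starRingEnd ℂ) (a z) * b z).re) :=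
  Complex.reCLM.contDiff.comp
    ((Complex.conjCLE.toContinuousLinearMap.contDiff.comp ha).mul hb)

lemma integral_deriv_zero {g : ℝ → ℝ} (hg : ContDiff ℝ 1 g) (hc : HasCompactSupport g) :
    ∫ x : ℝ, deriv g x = 0 := by
  have hcont : Continuous (deriv g) := hg.continuous_deriv le_rfl
  have hint : Integrable (deriv g) := hcont.integrable_of_hasCompactSupport hc.deriv
  have h1 := hc.integral_Iic_deriv_eq hg 0
  have h2 := hc.integral_Ioi_deriv_eq hg 0
  have h3 := intervalIntegral.integral_Iic_add_Ioi (b := (0:ℝ))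
    hint.integrableOn hint.integrableOn
  rw [h1, h2] at h3
  rw [← h3]; ring

lemma integral_divX_zero {G Φ : ℝ × ℝ → ℝ}
    (hΦcont : Continuous Φ) (hΦsupp : HasCompactSupport Φ)
    (hGC1 : ∀ y, ContDiff ℝ 1 (fun x => G (x, y)))
    (hGsupp : ∀ y, HasCompactSupport (fun x => G (x, y)))
    (hd : ∀ z : ℝ × ℝ, HasDerivAt (fun x => G (x, z.2)) (Φ z) z.1) :
    ∫ z : ℝ × ℝ, Φ z = 0 := by
  have hint : Integrable Φ := hΦcont.integrable_of_hasCompactSupport hΦsupp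
  have hint' : Integrable Φ ((volume : Measure ℝ).prod volume) := by
    rwa [← Measure.volume_eq_prod ℝ ℝ]
  calc ∫ z : ℝ × ℝ, Φ z = ∫ z, Φ z ∂((volume : Measure ℝ).prod volume) := by
        rw [← Measure.volume_eq_prod ℝ ℝ]
    _ = ∫ y, ∫ x, Φ (x, y) ∂volume ∂volume := integral_prod_symm Φ hint'
    _ = ∫ y : ℝ, (0:ℝ) ∂volume := by
        refine integral_congr_ae (Filter.Eventually.of_forall fun y => ?_)
        show (∫ x : ℝ, Φ (x, y)) = (0:ℝ)
        have h1 : (∫ x : ℝ, Φ (x, y)) = ∫ x : ℝ, deriv (fun x => G (x, y)) x :=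
          integral_congr_ae (Filter.Eventually.of_forall fun x => ((hd (x, y)).deriv).symm)
        rw [h1]
        exact integral_deriv_zero (hGC1 y) (hGsupp y)
    _ = 0 := integral_zero _ _

lemma integral_divY_zero {H Ψ : ℝ × ℝ → ℝ}
    (hΨcont : Continuous Ψ) (hΨsupp : HasCompactSupport Ψ)
    (hHC1 : ∀ x, ContDiff ℝ 1 (fun y => H (x, y)))
    (hHsupp : ∀ x, HasCompactSupport (fun y => H (x, y)))
    (hd : ∀ z : ℝ × ℝ, HasDerivAt (fun y => H (z.1, y)) (Ψ z) z.2) :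
    ∫ z : ℝ × ℝ, Ψ z = 0 := by
  have hint : Integrable Ψ := hΨcont.integrable_of_hasCompactSupport hΨsupp
  have hint' : Integrable Ψ ((volume : Measure ℝ).prod volume) := by
    rwa [← Measure.volume_eq_prod ℝ ℝ]
  calc ∫ z : ℝ × ℝ, Ψ z = ∫ z, Ψ z ∂((volume : Measure ℝ).prod volume) := by
        rw [← Measure.volume_eq_prod ℝ ℝ]
    _ = ∫ x, ∫ y, Ψ (x, y) ∂volume ∂volume := integral_prod Ψ hint'
    _ = ∫ x : ℝ, (0:ℝ) ∂volume := by
        refine integral_congr_ae (Filter.Eventually.of_forall fun x => ?_)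
        show (∫ y : ℝ, Ψ (x, y)) = (0:ℝ)
        have h1 : (∫ y : ℝ, Ψ (x, y)) = ∫ y : ℝ, deriv (fun y => H (x, y)) y :=
          integral_congr_ae (Filter.Eventually.of_forall fun y => ((hd (x, y)).deriv).symm)
        rw [h1]
        exact integral_deriv_zero (hHC1 x) (hHsupp x)
    _ = 0 := integral_zero _ _

end Aux

section Key

open Set
open scoped ContDiff

lemma one_le_inf : (1 : WithTop ℕ∞) ≤ ∞ := by exact_mod_cast le_top

lemma R_symm (a b : ℂ) : ((starRingEnd ℂ) a * b).re = ((starRingEnd ℂ) b * a).re := by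
  simp [Complex.mul_re]; ring

lemma continuous_R {E : Type*} [TopologicalSpace E]
    {a b : E → ℂ} (ha : Continuous a) (hb : Continuous b) :
    Continuous (fun z => ((starRingEnd ℂ) (a z) * b z).re) :=
  Complex.continuous_re.comp ((Complex.continuous_conj.comp ha).mul hb)

/-- The x-flux density. -/
noncomputable def PhiX (t : ℝ) (u : ℝ × ℝ → ℂ) (q : ℝ × ℝ → ℝ) : ℝ × ℝ → ℝ := fun z =>
  2 * (((starRingEnd ℂ) (DDx u z) * DDx (DDx u) z).re
        + ((starRingEnd ℂ) (u z) * DDx (DDx (DDx u)) z).re)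
    - (((starRingEnd ℂ) (DDx (DDx u) z) * DDx u z).re
        + ((starRingEnd ℂ) (DDx u z) * DDx (DDx u) z).re)
    + (deriv (fun x => q (x, t)) z.1 * ((starRingEnd ℂ) (u z) * u z).re
        + q (z.1, t) * (((starRingEnd ℂ) (DDx u z) * u z).re
            + ((starRingEnd ℂ) (u z) * DDx u z).re))

/-- The y-flux density. -/
noncomputable def PhiY (t : ℝ) (u : ℝ × ℝ → ℂ) (p : ℝ × ℝ → ℝ) : ℝ × ℝ → ℝ := fun z =>
  2 * (((starRingEnd ℂ) (DDy u z) * DDy (DDy u) z).re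
        + ((starRingEnd ℂ) (u z) * DDy (DDy (DDy u)) z).re)
    - (((starRingEnd ℂ) (DDy (DDy u) z) * DDy u z).re
        + ((starRingEnd ℂ) (DDy u z) * DDy (DDy u) z).re)
    + (deriv (fun y => p (y, t)) z.2 * ((starRingEnd ℂ) (u z) * u z).re
        + p (z.2, t) * (((starRingEnd ℂ) (DDy u z) * u z).re
            + ((starRingEnd ℂ) (u z) * DDy u z).re))

lemma keyX (t : ℝ) {u : ℝ × ℝ → ℂ} (hu : ContDiff ℝ ∞ u)
    {q : ℝ × ℝ → ℝ} (hq : ContDiff ℝ 1 q)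
    {K : Set (ℝ × ℝ)} (hK : IsCompact K) (h0 : ∀ z ∉ K, u z = 0) :
    Integrable (PhiX t u q) ∧ ∫ z : ℝ × ℝ, PhiX t u q z = 0 := by
  have hu1 : ContDiff ℝ ∞ (DDx u) := contDiff_DDx hu
  have hu2 : ContDiff ℝ ∞ (DDx (DDx u)) := contDiff_DDx hu1
  have hu3 : ContDiff ℝ ∞ (DDx (DDx (DDx u))) := contDiff_DDx hu2
  have hud : Differentiable ℝ u := hu.differentiable (by simp)
  have hu1d : Differentiable ℝ (DDx u) := hu1.differentiable (by simp)
  have hu2d : Differentiable ℝ (DDx (DDx u)) := hu2.differentiable (by simp)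
  have hu1z : ∀ z ∉ K, DDx u z = 0 := DDx_zero_off hK.isClosed h0
  have hu2z : ∀ z ∉ K, DDx (DDx u) z = 0 := DDx_zero_off hK.isClosed hu1z
  have hu3z : ∀ z ∉ K, DDx (DDx (DDx u)) z = 0 := DDx_zero_off hK.isClosed hu2z
  have hqt : ContDiff ℝ 1 (fun x => q (x, t)) := hq.comp (contDiff_id.prodMk contDiff_const)
  have hq'c : Continuous (deriv (fun x => q (x, t))) := hqt.continuous_deriv le_rfl
  have hΦcont : Continuous (PhiX t u q) := by
    unfold PhiX
    refine (((continuous_const.mul ((continuous_R hu1.continuous hu2.continuous).add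
      (continuous_R hu.continuous hu3.continuous))).sub
      ((continuous_R hu2.continuous hu1.continuous).add
        (continuous_R hu1.continuous hu2.continuous))).add
      (((hq'c.comp continuous_fst).mul (continuous_R hu.continuous hu.continuous)).add
        ((hq.continuous.comp (continuous_fst.prodMk continuous_const)).mul
          ((continuous_R hu1.continuous hu.continuous).add
            (continuous_R hu.continuous hu1.continuous)))))
  have hΦsupp : HasCompactSupport (PhiX t u q) :=
    HasCompactSupport.intro hK fun z hz => by
      simp [PhiX, h0 z hz, hu1z z hz, hu2z z hz, hu3z z hz]
  constructor
  · exact hΦcont.integrable_of_hasCompactSupport hΦsupp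
  · refine integral_divX_zero (G := fun w =>
      2 * ((starRingEnd ℂ) (u w) * DDx (DDx u) w).re
        - ((starRingEnd ℂ) (DDx u w) * DDx u w).re
        + q (w.1, t) * ((starRingEnd ℂ) (u w) * u w).re)
      hΦcont hΦsupp ?_ ?_ ?_
    · intro y
      have slice : ContDiff ℝ ∞ (fun x : ℝ => ((x, y) : ℝ × ℝ)) :=
        contDiff_id.prodMk contDiff_const
      have t1 : ContDiff ℝ ∞ (fun x : ℝ => ((starRingEnd ℂ) (u (x, y)) * DDx (DDx u) (x, y)).re) :=
        (contDiff_R hu hu2).comp slice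
      have t2 : ContDiff ℝ ∞ (fun x : ℝ => ((starRingEnd ℂ) (DDx u (x, y)) * DDx u (x, y)).re) :=
        (contDiff_R hu1 hu1).comp slice
      have t3 : ContDiff ℝ ∞ (fun x : ℝ => ((starRingEnd ℂ) (u (x, y)) * u (x, y)).re) :=
        (contDiff_R hu hu).comp slice
      exact ((contDiff_const.mul (t1.of_le one_le_inf)).sub (t2.of_le one_le_inf)).add
        (hqt.mul (t3.of_le one_le_inf))
    · intro y
      refine HasCompactSupport.intro (hK.image continuous_fst) fun x hx => ?_
      have hz : ((x, y) : ℝ × ℝ) ∉ K := fun h => hx ⟨(x, y), h, rfl⟩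
      simp [h0 _ hz, hu1z _ hz, hu2z _ hz]
    · intro z
      have hx := hasDerivAt_sliceX hud z
      have hx1 := hasDerivAt_sliceX hu1d z
      have hx2 := hasDerivAt_sliceX hu2d z
      have hqx : HasDerivAt (fun x => q (x, t)) (deriv (fun x => q (x, t)) z.1) z.1 :=
        ((hqt.differentiable one_ne_zero) z.1).hasDerivAt
      have comb := (((hasDerivAt_R hx hx2).const_mul (2:ℝ)).sub
        (hasDerivAt_R hx1 hx1)).add (hqx.mul (hasDerivAt_R hx hx))
      simpa [PhiX, Pi.add_def, Pi.sub_def, Pi.mul_def] using comb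

lemma keyY (t : ℝ) {u : ℝ × ℝ → ℂ} (hu : ContDiff ℝ ∞ u)
    {p : ℝ × ℝ → ℝ} (hp : ContDiff ℝ 1 p)
    {K : Set (ℝ × ℝ)} (hK : IsCompact K) (h0 : ∀ z ∉ K, u z = 0) :
    Integrable (PhiY t u p) ∧ ∫ z : ℝ × ℝ, PhiY t u p z = 0 := by
  have hu1 : ContDiff ℝ ∞ (DDy u) := contDiff_DDy hu
  have hu2 : ContDiff ℝ ∞ (DDy (DDy u)) := contDiff_DDy hu1
  have hu3 : ContDiff ℝ ∞ (DDy (DDy (DDy u))) := contDiff_DDy hu2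
  have hud : Differentiable ℝ u := hu.differentiable (by simp)
  have hu1d : Differentiable ℝ (DDy u) := hu1.differentiable (by simp)
  have hu2d : Differentiable ℝ (DDy (DDy u)) := hu2.differentiable (by simp)
  have hu1z : ∀ z ∉ K, DDy u z = 0 := DDy_zero_off hK.isClosed h0
  have hu2z : ∀ z ∉ K, DDy (DDy u) z = 0 := DDy_zero_off hK.isClosed hu1z
  have hu3z : ∀ z ∉ K, DDy (DDy (DDy u)) z = 0 := DDy_zero_off hK.isClosed hu2z
  have hpt : ContDiff ℝ 1 (fun y => p (y, t)) := hp.comp (contDiff_id.prodMk contDiff_const)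
  have hp'c : Continuous (deriv (fun y => p (y, t))) := hpt.continuous_deriv le_rfl
  have hΦcont : Continuous (PhiY t u p) := by
    unfold PhiY
    refine (((continuous_const.mul ((continuous_R hu1.continuous hu2.continuous).add
      (continuous_R hu.continuous hu3.continuous))).sub
      ((continuous_R hu2.continuous hu1.continuous).add
        (continuous_R hu1.continuous hu2.continuous))).add
      (((hp'c.comp continuous_snd).mul (continuous_R hu.continuous hu.continuous)).add
        ((hp.continuous.comp (continuous_snd.prodMk continuous_const)).mul
          ((continuous_R hu1.continuous hu.continuous).add
            (continuous_R hu.continuous hu1.continuous)))))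
  have hΦsupp : HasCompactSupport (PhiY t u p) :=
    HasCompactSupport.intro hK fun z hz => by
      simp [PhiY, h0 z hz, hu1z z hz, hu2z z hz, hu3z z hz]
  constructor
  · exact hΦcont.integrable_of_hasCompactSupport hΦsupp
  · refine integral_divY_zero (H := fun w =>
      2 * ((starRingEnd ℂ) (u w) * DDy (DDy u) w).re
        - ((starRingEnd ℂ) (DDy u w) * DDy u w).re
        + p (w.2, t) * ((starRingEnd ℂ) (u w) * u w).re)
      hΦcont hΦsupp ?_ ?_ ?_
    · intro x
      have slice : ContDiff ℝ ∞ (fun y : ℝ => ((x, y) : ℝ × ℝ)) :=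
        contDiff_const.prodMk contDiff_id
      have t1 : ContDiff ℝ ∞ (fun y : ℝ => ((starRingEnd ℂ) (u (x, y)) * DDy (DDy u) (x, y)).re) :=
        (contDiff_R hu hu2).comp slice
      have t2 : ContDiff ℝ ∞ (fun y : ℝ => ((starRingEnd ℂ) (DDy u (x, y)) * DDy u (x, y)).re) :=
        (contDiff_R hu1 hu1).comp slice
      have t3 : ContDiff ℝ ∞ (fun y : ℝ => ((starRingEnd ℂ) (u (x, y)) * u (x, y)).re) :=
        (contDiff_R hu hu).comp slice
      exact ((contDiff_const.mul (t1.of_le one_le_inf)).sub (t2.of_le one_le_inf)).add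
        (hpt.mul (t3.of_le one_le_inf))
    · intro x
      refine HasCompactSupport.intro (hK.image continuous_snd) fun y hy => ?_
      have hz : ((x, y) : ℝ × ℝ) ∉ K := fun h => hy ⟨(x, y), h, rfl⟩
      simp [h0 _ hz, hu1z _ hz, hu2z _ hz]
    · intro z
      have hx := hasDerivAt_sliceY hud z
      have hx1 := hasDerivAt_sliceY hu1d z
      have hx2 := hasDerivAt_sliceY hu2d z
      have hpx : HasDerivAt (fun y => p (y, t)) (deriv (fun y => p (y, t)) z.2) z.2 :=
        ((hpt.differentiable one_ne_zero) z.2).hasDerivAt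
      have comb := (((hasDerivAt_R hx hx2).const_mul (2:ℝ)).sub
        (hasDerivAt_R hx1 hx1)).add (hpx.mul (hasDerivAt_R hx hx))
      simpa [PhiY, Pi.add_def, Pi.sub_def, Pi.mul_def] using comb

end Key

section Main

open Set Metric
open scoped ContDiff

/-- The time derivative of `f` as a directional `fderiv` of the joint function. -/
noncomputable def Dtt (f : ℝ → ℝ × ℝ → ℂ) : ℝ → ℝ × ℝ → ℂ :=
  fun τ z => fderiv ℝ (fun w : ℝ × (ℝ × ℝ) => f w.1 w.2) (τ, z) (1, 0)

lemma hasDerivAt_Dtt {f : ℝ → ℝ × ℝ → ℂ}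
    (hf : ContDiff ℝ (⊤ : ℕ∞) (fun w : ℝ × (ℝ × ℝ) => f w.1 w.2)) (τ : ℝ) (z : ℝ × ℝ) :
    HasDerivAt (fun σ => f σ z) (Dtt f τ z) τ := by
  have h1 : HasDerivAt (fun σ : ℝ => ((σ, z) : ℝ × (ℝ × ℝ))) ((1:ℝ), (0 : ℝ × ℝ)) τ :=
    HasDerivAt.prodMk (hasDerivAt_id _) (hasDerivAt_const _ _)
  have h2 := ((hf.differentiable (by simp) (τ, z)).hasFDerivAt).comp_hasDerivAt τ h1
  simpa [Dtt, Function.comp_def] using h2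


/-- Conservation law (2.11) of Theorem 2.2: for a smooth, compactly supported (in `(x,y)`,
uniformly in `t`) solution `f` of the linear evolution equation (2.10), the L² norm
`∬ |f(t,x,y)|² dx dy` is conserved. -/
theorem L2_conservation_for_evolution_2_10
    (p q : ℝ × ℝ → ℝ) (hp : ContDiff ℝ 1 p) (hq : ContDiff ℝ 1 q)
    (f : ℝ → ℝ × ℝ → ℂ)
    (hf : ContDiff ℝ (⊤ : ℕ∞) (fun w : ℝ × (ℝ × ℝ) => f w.1 w.2))
    (K : Set (ℝ × ℝ)) (hK : IsCompact K)
    (hsupp : ∀ t : ℝ, ∀ z : ℝ × ℝ, z ∉ K → f t z = 0)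
    (heq : ∀ t : ℝ, ∀ z : ℝ × ℝ,
      deriv (fun τ => f τ z) t
        = dX (dX (dX (f t))) z + dY (dY (dY (f t))) z
          + (q (z.1, t) : ℂ) * dX (f t) z
          + (1 / 2 : ℂ) * ((deriv (fun x => q (x, t)) z.1 : ℝ) : ℂ) * f t z
          + (p (z.2, t) : ℂ) * dY (f t) z
          + (1 / 2 : ℂ) * ((deriv (fun y => p (y, t)) z.2 : ℝ) : ℂ) * f t z) :
    ∀ t : ℝ, ∫ z : ℝ × ℝ, ‖f t z‖ ^ 2 = ∫ z : ℝ × ℝ, ‖f 0 z‖ ^ 2 := by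
  have hfi : ContDiff ℝ ∞ (fun w : ℝ × (ℝ × ℝ) => f w.1 w.2) := hf.of_le (by simp)
  have hft : ∀ t, ContDiff ℝ ∞ (f t) := fun t =>
    hfi.comp ((contDiff_const.prodMk contDiff_id :
      ContDiff ℝ ∞ (fun z : ℝ × ℝ => ((t, z) : ℝ × (ℝ × ℝ)))))
  -- continuity of the time derivative, jointly
  have hDtcont : Continuous (fun w : ℝ × (ℝ × ℝ) => Dtt f w.1 w.2) := by
    have h := hfi.continuous_fderiv (by simp)
    have := h.clm_apply (continuous_const (y := ((1:ℝ), (0 : ℝ × ℝ))))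
    simpa [Dtt] using this
  -- pointwise time derivative of the squared norm
  have hderiv : ∀ τ : ℝ, ∀ z : ℝ × ℝ,
      HasDerivAt (fun σ => ‖f σ z‖ ^ 2)
        (2 * ((starRingEnd ℂ) (f τ z) * Dtt f τ z).re) τ := by
    intro τ z
    have h := hasDerivAt_R (hasDerivAt_Dtt hf τ z) (hasDerivAt_Dtt hf τ z)
    have hfun : (fun σ : ℝ => ‖f σ z‖ ^ 2)
        = fun σ => ((starRingEnd ℂ) (f σ z) * f σ z).re :=
      funext fun σ => norm_sq_eq_R _
    rw [hfun]
    convert h using 1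
    rw [R_symm (Dtt f τ z) (f τ z)]
    ring
  -- derivative of the energy
  have hE : ∀ t : ℝ, HasDerivAt (fun τ => ∫ z : ℝ × ℝ, ‖f τ z‖ ^ 2)
      (∫ z : ℝ × ℝ, 2 * ((starRingEnd ℂ) (f t z) * Dtt f t z).re) t := by
    intro t
    have hF'c : Continuous (fun w : ℝ × (ℝ × ℝ) =>
        2 * ((starRingEnd ℂ) (f w.1 w.2) * Dtt f w.1 w.2).re) :=
      continuous_const.mul (continuous_R (hf.continuous) hDtcont)
    obtain ⟨C, hC⟩ := ((isCompact_closedBall t 1).prod hK).exists_bound_of_continuousOn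
      hF'c.continuousOn
    have hbound_int : Integrable (K.indicator (fun _ => C)) := by
      rw [integrable_indicator_iff hK.measurableSet]
      exact integrableOn_const hK.measure_lt_top.ne
    have := hasDerivAt_integral_of_dominated_loc_of_deriv_le (s := ball t 1)
      (μ := (volume : Measure (ℝ × ℝ)))
      (F := fun τ z => ‖f τ z‖ ^ 2)
      (F' := fun τ z => 2 * ((starRingEnd ℂ) (f τ z) * Dtt f τ z).re)
      (x₀ := t) (bound := K.indicator (fun _ => C))
      (ball_mem_nhds t one_pos)
      (Filter.Eventually.of_forall fun τ =>
        (((hft τ).continuous.norm.pow 2).aestronglyMeasurable))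
      ?_ ?_ ?_ hbound_int ?_
    · exact this.2
    · -- integrability at t
      refine Continuous.integrable_of_hasCompactSupport ((hft t).continuous.norm.pow 2) ?_
      exact HasCompactSupport.intro hK fun z hz => by simp [hsupp t z hz]
    · exact (hF'c.comp (continuous_const.prodMk continuous_id)).aestronglyMeasurable
    · -- the bound
      refine Filter.Eventually.of_forall fun z => ?_
      intro τ hτ
      by_cases hz : z ∈ K
      · rw [indicator_of_mem hz]
        exact hC (τ, z) ⟨ball_subset_closedBall hτ, hz⟩
      · rw [indicator_of_notMem hz]
        have h1 : f τ z = 0 := hsupp τ z hz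
        simp [h1]
    · exact Filter.Eventually.of_forall fun z τ _ => hderiv τ z
  -- the derivative vanishes
  have hzero : ∀ t : ℝ,
      (∫ z : ℝ × ℝ, 2 * ((starRingEnd ℂ) (f t z) * Dtt f t z).re) = 0 := by
    intro t
    have hX := keyX t (hft t) hq hK (hsupp t)
    have hY := keyY t (hft t) hp hK (hsupp t)
    have hud : Differentiable ℝ (f t) := (hft t).differentiable (by simp)
    have hu1dx : Differentiable ℝ (DDx (f t)) :=
      (contDiff_DDx (hft t)).differentiable (by simp)
    have hu2dx : Differentiable ℝ (DDx (DDx (f t))) :=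
      (contDiff_DDx (contDiff_DDx (hft t))).differentiable (by simp)
    have hu1dy : Differentiable ℝ (DDy (f t)) :=
      (contDiff_DDy (hft t)).differentiable (by simp)
    have hu2dy : Differentiable ℝ (DDy (DDy (f t))) :=
      (contDiff_DDy (contDiff_DDy (hft t))).differentiable (by simp)
    have hpoint : ∀ z : ℝ × ℝ,
        2 * ((starRingEnd ℂ) (f t z) * Dtt f t z).re
          = PhiX t (f t) q z + PhiY t (f t) p z := by
      intro z
      have e1 : Dtt f t z
          = DDx (DDx (DDx (f t))) z + DDy (DDy (DDy (f t))) z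
            + (q (z.1, t) : ℂ) * DDx (f t) z
            + (1 / 2 : ℂ) * ((deriv (fun x => q (x, t)) z.1 : ℝ) : ℂ) * f t z
            + (p (z.2, t) : ℂ) * DDy (f t) z
            + (1 / 2 : ℂ) * ((deriv (fun y => p (y, t)) z.2 : ℝ) : ℂ) * f t z := by
        have hd := (hasDerivAt_Dtt hf t z).deriv
        have e := (hd.symm).trans (heq t z)
        rwa [dX_eq_DDx hud, dX_eq_DDx hu1dx, dX_eq_DDx hu2dx,
          dY_eq_DDy hud, dY_eq_DDy hu1dy, dY_eq_DDy hu2dy] at e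
      rw [e1]
      unfold PhiX PhiY
      simp only [Complex.mul_re, Complex.mul_im, Complex.add_re, Complex.add_im,
        Complex.ofReal_re, Complex.ofReal_im, Complex.conj_re, Complex.conj_im,
        Complex.div_re, Complex.div_im, Complex.one_re, Complex.one_im,
        Complex.normSq_apply, Complex.re_ofNat, Complex.im_ofNat]
      ring
    calc (∫ z : ℝ × ℝ, 2 * ((starRingEnd ℂ) (f t z) * Dtt f t z).re)
        = ∫ z : ℝ × ℝ, (PhiX t (f t) q z + PhiY t (f t) p z) :=
          integral_congr_ae (Filter.Eventually.of_forall hpoint)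
      _ = (∫ z : ℝ × ℝ, PhiX t (f t) q z) + ∫ z : ℝ × ℝ, PhiY t (f t) p z :=
          integral_add hX.1 hY.1
      _ = 0 := by rw [hX.2, hY.2]; ring
  have hdiff : Differentiable ℝ (fun τ => ∫ z : ℝ × ℝ, ‖f τ z‖ ^ 2) := by
    intro t
    exact (hE t).differentiableAt
  intro t
  exact is_const_of_deriv_eq_zero hdiff (fun s => by rw [(hE s).deriv, hzero s]) t 0
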